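/- Let S_{i,j,k} = {(ξ,η) ∈ ℝ^d × ℝ^d : |ξ| ≤ 2·2^i, |η| ≤ 4·2^{i-j}, 2^{-k-1} ≤ |sin θ| ≤ 2^{-k+1}} where θ is the angle between ξ and η. Then its 2d-dimensional Lebesgue measure satisfies |S_{i,j,k}| ≤ C_d 2^{id} 2^{(i-j)d} 2^{-k(d-1)}. -/

import Mathlib

open MeasureTheory
open scoped RealInnerProductSpace ENNReal

/-- `|sin θ(ξ, η)| = √(1 - (ξ·η)²/(|ξ|²|η|²))` for nonzero `ξ, η`. -/
noncomputable def sinAngle {d : ℕ} (ξ η : EuclideanSpace ℝ (Fin d)) : ℝ :=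
  Real.sqrt (1 - (⟪ξ, η⟫ : ℝ) ^ 2 / (‖ξ‖ ^ 2 * ‖η‖ ^ 2))

lemma abs_coord_le (d : ℕ) (x : EuclideanSpace ℝ (Fin d)) (l : Fin d) : |x l| ≤ ‖x‖ := by
  rw [EuclideanSpace.norm_eq, ← Real.sqrt_sq_eq_abs]
  exact Real.sqrt_le_sqrt (by
    simpa [sq_abs] using Finset.single_le_sum (f := fun i => |x i|^2)
      (fun i _ => sq_nonneg _) (Finset.mem_univ l))

lemma ofReal_two_zpow (n : ℤ) : ENNReal.ofReal ((2:ℝ)^n) = (2:ℝ≥0∞)^n := by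
  rcases n with n | n
  · simp [ENNReal.ofReal_pow]
  · rw [zpow_negSucc, zpow_negSucc, ENNReal.ofReal_inv_of_pos (by positivity),
      ENNReal.ofReal_pow (by norm_num)]
    norm_num

lemma meas_sin (d : ℕ) : Measurable fun p : EuclideanSpace ℝ (Fin d) × EuclideanSpace ℝ (Fin d) => sinAngle p.1 p.2 := by
  unfold sinAngle
  apply Measurable.sqrt
  apply Measurable.sub measurable_const
  apply Measurable.div
  · exact ((continuous_inner (𝕜 := ℝ)).measurable).pow_const 2
  · exact ((continuous_fst.norm.pow 2).mul (continuous_snd.norm.pow 2)).measurable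

lemma box_eq (d : ℕ) (w : Fin d → ℝ) :
    {x : EuclideanSpace ℝ (Fin d) | ∀ l, x l ∈ Set.Icc (-(w l)) (w l)} =
      (MeasurableEquiv.toLp 2 (Fin d → ℝ)).symm ⁻¹' (Set.univ.pi fun l => Set.Icc (-(w l)) (w l)) := by
  ext x
  simp only [Set.mem_setOf_eq, Set.mem_preimage, Set.mem_pi, Set.mem_univ, forall_true_left]
  rfl

lemma box_measurable (d : ℕ) (w : Fin d → ℝ) :
    MeasurableSet {x : EuclideanSpace ℝ (Fin d) | ∀ l, x l ∈ Set.Icc (-(w l)) (w l)} := by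
  rw [box_eq]
  exact (MeasurableEquiv.toLp 2 (Fin d → ℝ)).symm.measurable
    (MeasurableSet.univ_pi fun l => measurableSet_Icc)

lemma vol_box (d : ℕ) (w : Fin d → ℝ) :
    volume {x : EuclideanSpace ℝ (Fin d) | ∀ l, x l ∈ Set.Icc (-(w l)) (w l)} =
      ∏ l, ENNReal.ofReal (2 * w l) := by
  rw [box_eq, (EuclideanSpace.volume_preserving_symm_measurableEquiv_toLp (Fin d)).measure_preimage
    (MeasurableSet.univ_pi fun l => measurableSet_Icc).nullMeasurableSet, volume_pi_pi]
  congr 1; ext l; rw [Real.volume_Icc]; ring_nf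

lemma slice_bound (d : ℕ) (hd : 2 ≤ d) (ξ : EuclideanSpace ℝ (Fin d)) (hξ : ξ ≠ 0)
    (R δ : ℝ) (hR : 0 ≤ R) (hδ : 0 ≤ δ) :
    volume {η : EuclideanSpace ℝ (Fin d) | ‖η‖ ≤ R ∧ sinAngle ξ η ≤ δ} ≤
      ENNReal.ofReal (2 * R) * ENNReal.ofReal (2 * (δ * R)) ^ (d - 1) := by
  set z : Fin d := ⟨0, by omega⟩ with hz
  set u : EuclideanSpace ℝ (Fin d) := ‖ξ‖⁻¹ • ξ with hu
  have hnξ : (0:ℝ) < ‖ξ‖ := norm_pos_iff.mpr hξ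
  have hu1 : ‖u‖ = 1 := by
    rw [hu, norm_smul, norm_inv, norm_norm, inv_mul_cancel₀ hnξ.ne']
  obtain ⟨b, hb⟩ := Orthonormal.exists_orthonormalBasis_extension_of_card_eq
    (𝕜 := ℝ) (card_ι := by simp [finrank_euclideanSpace_fin])
    (v := fun _ : Fin d => u) (s := {z})
    (by
      rw [orthonormal_iff_ite]
      intro i j
      have hij : i = j := Subsingleton.elim i j
      subst hij
      rw [if_pos rfl]
      show (⟪u, u⟫ : ℝ) = 1
      rw [real_inner_self_eq_norm_sq, hu1, one_pow])
  have hb0 : b z = u := hb z rfl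
  let w : Fin d → ℝ := fun l => if l = z then R else δ * R
  have key : {η : EuclideanSpace ℝ (Fin d) | ‖η‖ ≤ R ∧ sinAngle ξ η ≤ δ} ⊆
      b.repr ⁻¹' {x : EuclideanSpace ℝ (Fin d) | ∀ l, x l ∈ Set.Icc (-(w l)) (w l)} := by
    rintro η ⟨hηR, hsin⟩ l
    rw [Set.mem_Icc, ← abs_le]
    show |b.repr η l| ≤ if l = z then R else δ * R
    rw [b.repr_apply_apply]
    by_cases hl : l = z
    · rw [if_pos hl]
      have hblz : b l = u := by rw [hl]; exact hb0
      calc |(⟪b l, η⟫ : ℝ)| ≤ ‖b l‖ * ‖η‖ := abs_real_inner_le_norm _ _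
        _ ≤ R := by rw [hblz, hu1, one_mul]; exact hηR
    · rw [if_neg hl]
      have hblu : (⟪b l, u⟫ : ℝ) = 0 := by
        rw [← hb0]
        simpa [hl] using orthonormal_iff_ite.mp b.orthonormal l z
      have hbl : (⟪b l, η⟫ : ℝ) = ⟪b l, η - (⟪u, η⟫ : ℝ) • u⟫ := by
        rw [inner_sub_right, real_inner_smul_right, hblu]; ring
      have hcle : |(⟪u, η⟫ : ℝ)| ≤ ‖η‖ := by
        calc |(⟪u, η⟫ : ℝ)| ≤ ‖u‖ * ‖η‖ := abs_real_inner_le_norm _ _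
          _ = ‖η‖ := by rw [hu1, one_mul]
      have hperp : ‖η - (⟪u, η⟫ : ℝ) • u‖ ^ 2 = ‖η‖ ^ 2 - (⟪u, η⟫ : ℝ) ^ 2 := by
        rw [norm_sub_sq_real, real_inner_smul_right, norm_smul, hu1, Real.norm_eq_abs,
          real_inner_comm η u]
        rw [mul_one, sq_abs]
        ring
      have hperp_le : ‖η - (⟪u, η⟫ : ℝ) • u‖ ^ 2 ≤ (δ * R) ^ 2 := by
        rcases eq_or_ne η 0 with rfl | hη
        · rw [hperp]
          simp only [inner_zero_right, norm_zero]
          norm_num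
          positivity
        · have hnη : (0:ℝ) < ‖η‖ := norm_pos_iff.mpr hη
          have hip : (⟪ξ, η⟫ : ℝ) = ‖ξ‖ * ⟪u, η⟫ := by
            rw [hu, real_inner_smul_left]
            field_simp
          have hs : sinAngle ξ η = Real.sqrt (1 - (⟪u, η⟫ : ℝ) ^ 2 / ‖η‖ ^ 2) := by
            rw [sinAngle, hip]
            congr 2
            field_simp
          have h1 : (0:ℝ) ≤ 1 - (⟪u, η⟫ : ℝ) ^ 2 / ‖η‖ ^ 2 := by
            rw [sub_nonneg, div_le_one (by positivity)]
            calc (⟪u, η⟫ : ℝ) ^ 2 = |(⟪u, η⟫ : ℝ)| ^ 2 := (sq_abs _).symm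
              _ ≤ ‖η‖ ^ 2 := by gcongr
          have h2 : 1 - (⟪u, η⟫ : ℝ) ^ 2 / ‖η‖ ^ 2 ≤ δ ^ 2 := by
            rw [hs] at hsin
            calc 1 - (⟪u, η⟫ : ℝ) ^ 2 / ‖η‖ ^ 2
                = Real.sqrt (1 - (⟪u, η⟫ : ℝ) ^ 2 / ‖η‖ ^ 2) ^ 2 := (Real.sq_sqrt h1).symm
              _ ≤ δ ^ 2 := by gcongr
          calc ‖η - (⟪u, η⟫ : ℝ) • u‖ ^ 2 = ‖η‖ ^ 2 - (⟪u, η⟫ : ℝ) ^ 2 := hperp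
            _ = ‖η‖ ^ 2 * (1 - (⟪u, η⟫ : ℝ) ^ 2 / ‖η‖ ^ 2) := by field_simp
            _ ≤ R ^ 2 * δ ^ 2 := by
                apply mul_le_mul _ h2 h1 (by positivity)
                gcongr
            _ = (δ * R) ^ 2 := by ring
      have hfin : ‖η - (⟪u, η⟫ : ℝ) • u‖ ≤ δ * R := by
        have h := Real.sqrt_le_sqrt hperp_le
        rwa [Real.sqrt_sq (norm_nonneg _), Real.sqrt_sq (by positivity)] at h
      calc |(⟪b l, η⟫ : ℝ)| = |(⟪b l, η - (⟪u, η⟫ : ℝ) • u⟫ : ℝ)| := by rw [hbl]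
        _ ≤ ‖b l‖ * ‖η - (⟪u, η⟫ : ℝ) • u‖ := abs_real_inner_le_norm _ _
        _ ≤ δ * R := by rw [b.orthonormal.1 l, one_mul]; exact hfin
  calc volume {η : EuclideanSpace ℝ (Fin d) | ‖η‖ ≤ R ∧ sinAngle ξ η ≤ δ}
      ≤ volume (b.repr ⁻¹' {x : EuclideanSpace ℝ (Fin d) | ∀ l, x l ∈ Set.Icc (-(w l)) (w l)}) :=
        measure_mono key
    _ = volume {x : EuclideanSpace ℝ (Fin d) | ∀ l, x l ∈ Set.Icc (-(w l)) (w l)} :=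
        b.measurePreserving_repr.measure_preimage (box_measurable d w).nullMeasurableSet
    _ = ∏ l, ENNReal.ofReal (2 * w l) := vol_box d w
    _ = ENNReal.ofReal (2 * R) * ENNReal.ofReal (2 * (δ * R)) ^ (d - 1) := by
        rw [← Finset.mul_prod_erase Finset.univ _ (Finset.mem_univ z)]
        show ENNReal.ofReal (2 * if z = z then R else δ * R) * _ = _
        rw [if_pos rfl]
        congr 1
        rw [Finset.prod_congr rfl (fun l hl =>
          show ENNReal.ofReal (2 * w l) = ENNReal.ofReal (2 * (δ * R)) by
          show ENNReal.ofReal (2 * if l = z then R else δ * R) = _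
          rw [if_neg (Finset.ne_of_mem_erase hl)]), Finset.prod_const,
          Finset.card_erase_of_mem (Finset.mem_univ _), Finset.card_univ, Fintype.card_fin]

lemma two_zpow_pow (z : ℤ) (n : ℕ) : ((2:ℝ≥0∞) ^ z) ^ n = 2 ^ (z * n) := by
  induction n with
  | zero => simp
  | succ n ih =>
      rw [pow_succ, ih, ← ENNReal.zpow_add (by norm_num) (by norm_num)]
      congr 1
      push_cast
      ring

lemma arith (d i m k : ℕ) (hd : 2 ≤ d) :
    (2:ℝ≥0∞) ^ ((((i:ℤ))+2)*(d:ℤ)) * ((2:ℝ≥0∞) ^ (((m:ℤ))+3) * ((2:ℝ≥0∞) ^ (((m:ℤ))+4-(k:ℤ))) ^ (d-1)) ≤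
      (2:ℝ≥0∞) ^ (6*d) * 2 ^ (i*d) * 2 ^ (m*d) * 2 ^ (-(k * (d-1) : ℤ)) := by
  have h2 : (2:ℝ≥0∞) ≠ 0 := by norm_num
  have h2' : (2:ℝ≥0∞) ≠ ⊤ := by norm_num
  have hd1 : (1:ℕ) ≤ d := by omega
  calc (2:ℝ≥0∞) ^ ((((i:ℤ))+2)*(d:ℤ)) * ((2:ℝ≥0∞) ^ (((m:ℤ))+3) * ((2:ℝ≥0∞) ^ (((m:ℤ))+4-(k:ℤ))) ^ (d-1))
      = (2:ℝ≥0∞) ^ ((((i:ℤ))+2)*(d:ℤ) + ((((m:ℤ))+3) + ((((m:ℤ))+4-(k:ℤ)) * ((d:ℤ)-1)))) := by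
        rw [two_zpow_pow, ← ENNReal.zpow_add h2 h2', ← ENNReal.zpow_add h2 h2']
        congr 1
        push_cast [Nat.cast_sub hd1]
        ring
    _ ≤ (2:ℝ≥0∞) ^ ((6*(d:ℤ)) + (i*(d:ℤ)) + (m*(d:ℤ)) + (-(k * ((d:ℤ)-1)))) := by
        apply ENNReal.monotone_zpow (by norm_num)
        nlinarith [Int.ofNat_le.mpr hd1]
    _ = (2:ℝ≥0∞) ^ (6*d) * 2 ^ (i*d) * 2 ^ (m*d) * 2 ^ (-(k * (d-1) : ℤ)) := by
        rw [ENNReal.zpow_add h2 h2', ENNReal.zpow_add h2 h2', ENNReal.zpow_add h2 h2']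
        rw [← zpow_natCast (2:ℝ≥0∞) (6*d), ← zpow_natCast (2:ℝ≥0∞) (i*d), ← zpow_natCast (2:ℝ≥0∞) (m*d)]
        congr 2 <;> push_cast [hd1] <;> ring

/-- Volume bound `|S_{i,j,k}| ≤ C_d 2^{id} 2^{(i-j)d} 2^{-k(d-1)}` for the sets
`S_{i,j,k} = {(ξ,η) : |ξ| ≤ 2·2^i, |η| ≤ 4·2^{i-j}, 2^{-k-1} ≤ |sin θ| ≤ 2^{-k+1}}`. -/
theorem stmt_16 (d : ℕ) (hd : 2 ≤ d) :
    ∃ C : ℝ≥0∞, C < ⊤ ∧ ∀ i j k : ℕ, j ≤ i →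
      volume {p : EuclideanSpace ℝ (Fin d) × EuclideanSpace ℝ (Fin d) |
          ‖p.1‖ ≤ 2 * 2 ^ i ∧ ‖p.2‖ ≤ 4 * 2 ^ (i - j) ∧
            (2 : ℝ) ^ (-(k : ℤ) - 1) ≤ sinAngle p.1 p.2 ∧
              sinAngle p.1 p.2 ≤ (2 : ℝ) ^ (-(k : ℤ) + 1)} ≤
        C * 2 ^ (i * d) * 2 ^ ((i - j) * d) * 2 ^ (-(k * (d - 1) : ℤ)) := by
  classical
  set E := EuclideanSpace ℝ (Fin d)
  refine ⟨(2:ℝ≥0∞) ^ (6*d), ENNReal.pow_lt_top (by norm_num), fun i j k hji => ?_⟩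
  set m := i - j with hm
  set a : ℝ := 2 * 2 ^ i with ha
  set R : ℝ := 4 * 2 ^ m with hR
  set δ : ℝ := (2:ℝ) ^ (-(k:ℤ) + 1) with hδ
  have hR0 : (0:ℝ) ≤ R := by positivity
  have hδ0 : (0:ℝ) ≤ δ := by positivity
  have ha0 : (0:ℝ) ≤ a := by positivity
  set S : Set (E × E) := {p : E × E |
      ‖p.1‖ ≤ a ∧ ‖p.2‖ ≤ R ∧
        (2 : ℝ) ^ (-(k : ℤ) - 1) ≤ sinAngle p.1 p.2 ∧ sinAngle p.1 p.2 ≤ δ} with hSdef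
  have hS : MeasurableSet S := by
    apply MeasurableSet.inter
    · exact measurableSet_le continuous_fst.norm.measurable measurable_const
    apply MeasurableSet.inter
    · exact measurableSet_le continuous_snd.norm.measurable measurable_const
    apply MeasurableSet.inter
    · exact measurableSet_le measurable_const (meas_sin d)
    · exact measurableSet_le (meas_sin d) measurable_const
  have hz : (volume ({(0:E)} : Set E)) = 0 := by
    refine le_antisymm ?_ zero_le
    calc volume ({(0:E)} : Set E)
        ≤ volume {x : E | ∀ l, x l ∈ Set.Icc (-(0:ℝ)) (0:ℝ)} := by
          apply measure_mono
          rintro x hx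
          simp only [Set.mem_singleton_iff] at hx
          subst hx
          intro l
          simp
      _ = ∏ _l : Fin d, ENNReal.ofReal (2 * (0:ℝ)) := vol_box d (fun _ => 0)
      _ = 0 := Finset.prod_eq_zero (Finset.mem_univ (⟨0, by omega⟩ : Fin d)) (by simp)
  set B : ℝ≥0∞ := ENNReal.ofReal (2 * R) * ENNReal.ofReal (2 * (δ * R)) ^ (d - 1) with hB
  have hslice : ∀ ξ : E, ξ ≠ 0 →
      volume (Prod.mk ξ ⁻¹' S) ≤ Set.indicator {ξ : E | ‖ξ‖ ≤ a} (fun _ => B) ξ := by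
    intro ξ hξ
    by_cases hξa : ‖ξ‖ ≤ a
    · rw [Set.indicator_of_mem (show ξ ∈ {ξ : E | ‖ξ‖ ≤ a} from hξa)]
      refine le_trans (measure_mono ?_) (slice_bound d hd ξ hξ R δ hR0 hδ0)
      rintro η ⟨_, h2', _, h4⟩
      exact ⟨h2', h4⟩
    · rw [Set.indicator_of_notMem (show ξ ∉ {ξ : E | ‖ξ‖ ≤ a} from hξa)]
      have : Prod.mk ξ ⁻¹' S = ∅ := by
        ext η
        simp only [Set.mem_preimage, Set.mem_empty_iff_false, iff_false]
        rintro ⟨h1, _⟩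
        exact hξa h1
      simp [this]
  have hae : ∀ᵐ ξ : E, volume (Prod.mk ξ ⁻¹' S) ≤ Set.indicator {ξ : E | ‖ξ‖ ≤ a} (fun _ => B) ξ := by
    have h0 : ∀ᵐ ξ : E, ξ ≠ 0 := by
      rw [ae_iff]
      convert hz using 2
      simp
    filter_upwards [h0] with ξ hξ using hslice ξ hξ
  have hball : volume {ξ : E | ‖ξ‖ ≤ a} ≤ ENNReal.ofReal (2 * a) ^ d := by
    calc volume {ξ : E | ‖ξ‖ ≤ a}
        ≤ volume {x : E | ∀ l, x l ∈ Set.Icc (-a) a} := by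
          apply measure_mono
          intro x hx l
          rw [Set.mem_Icc, ← abs_le]
          exact (abs_coord_le d x l).trans hx
      _ = ∏ _l : Fin d, ENNReal.ofReal (2 * a) := vol_box d (fun _ => a)
      _ = ENNReal.ofReal (2 * a) ^ d := by
          rw [Finset.prod_const, Finset.card_univ, Fintype.card_fin]
  have hmb : MeasurableSet {ξ : E | ‖ξ‖ ≤ a} :=
    measurableSet_le continuous_norm.measurable measurable_const
  have key : volume S ≤ ENNReal.ofReal (2 * a) ^ d * B := by
    calc volume S = ∫⁻ ξ, volume (Prod.mk ξ ⁻¹' S) := by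
          rw [Measure.volume_eq_prod, Measure.prod_apply hS]
      _ ≤ ∫⁻ ξ, Set.indicator {ξ : E | ‖ξ‖ ≤ a} (fun _ => B) ξ := lintegral_mono_ae hae
      _ = B * volume {ξ : E | ‖ξ‖ ≤ a} := lintegral_indicator_const hmb B
      _ ≤ B * ENNReal.ofReal (2 * a) ^ d := by gcongr
      _ = ENNReal.ofReal (2 * a) ^ d * B := mul_comm _ _
  -- now numerics
  have e1 : ENNReal.ofReal (2 * a) = (2:ℝ≥0∞) ^ ((i:ℤ) + 2) := by
    rw [show (2:ℝ) * a = (2:ℝ) ^ ((i:ℤ) + 2) by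
      rw [ha, zpow_add₀ (two_ne_zero), zpow_natCast]; norm_num; ring]
    exact ofReal_two_zpow _
  have e2 : ENNReal.ofReal (2 * R) = (2:ℝ≥0∞) ^ ((m:ℤ) + 3) := by
    rw [show (2:ℝ) * R = (2:ℝ) ^ ((m:ℤ) + 3) by
      rw [hR, zpow_add₀ (two_ne_zero), zpow_natCast]; norm_num; ring]
    exact ofReal_two_zpow _
  have e3 : ENNReal.ofReal (2 * (δ * R)) = (2:ℝ≥0∞) ^ ((m:ℤ) + 4 - k) := by
    rw [show (2:ℝ) * (δ * R) = (2:ℝ) ^ ((m:ℤ) + 4 - k) by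
      rw [hR, hδ, show ((m:ℤ) + 4 - k) = (-(k:ℤ) + 1) + ((m:ℤ) + 3) by ring,
        zpow_add₀ (two_ne_zero) (-(k:ℤ) + 1), zpow_add₀ (two_ne_zero) (m:ℤ), zpow_natCast]
      norm_num; ring]
    exact ofReal_two_zpow _
  calc volume S ≤ ENNReal.ofReal (2 * a) ^ d * B := key
    _ = (2:ℝ≥0∞) ^ (((i:ℤ)+2)*(d:ℤ)) * ((2:ℝ≥0∞) ^ ((m:ℤ)+3) * ((2:ℝ≥0∞) ^ ((m:ℤ)+4-(k:ℤ))) ^ (d-1)) := by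
        rw [hB, e1, e2, e3, two_zpow_pow]
    _ ≤ (2:ℝ≥0∞) ^ (6*d) * 2 ^ (i*d) * 2 ^ (m*d) * 2 ^ (-(k * (d-1) : ℤ)) := arith d i m k hd
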